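/- arXiv:2009.09998 — 5 statements merged into one kernel-verified Lean document; each statement's English description precedes it below -/
import Mathlib

section
/- Suppose Assumption 1 (full rank) holds. Then the conditional log-likelihood β ↦ log L(β) attains its maximum over ℝ^p at a (finite) point, and the maximizer is unique, if and only if Assumption 2 (no separation) holds. (Theorem 1 of the paper.) -/
open scoped BigOperators RealInnerProductSpace

noncomputable section

/-- Real value of a binary indicator. -/
def bval (b : Bool) : ℝ := if b then 1 else 0

/-- The alternative set `B_i = {d ∈ {0,1}^T : ∑_t d_t = ∑_t Y_{it}}`. -/
def altSet (T : ℕ) (Yi : Fin T → Bool) : Finset (Fin T → Bool) :=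
  Finset.univ.filter fun d => (∑ t, (d t).toNat) = ∑ t, (Yi t).toNat

/-- The conditional log-likelihood `log L(β)`. -/
def logL {n T p : ℕ} (X : Fin n → Fin T → EuclideanSpace ℝ (Fin p))
    (Y : Fin n → Fin T → Bool) (β : EuclideanSpace ℝ (Fin p)) : ℝ :=
  ∑ i, ((∑ t, bval (Y i t) * ⟪X i t, β⟫) -
    Real.log (∑ d ∈ altSet T (Y i), Real.exp (∑ t, bval (d t) * ⟪X i t, β⟫)))

/-- The conditional-logit (softmax) weights `w_i(d; β)`. -/
def cweight {n T p : ℕ} (X : Fin n → Fin T → EuclideanSpace ℝ (Fin p))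
    (Y : Fin n → Fin T → Bool) (i : Fin n) (d : Fin T → Bool)
    (β : EuclideanSpace ℝ (Fin p)) : ℝ :=
  Real.exp (∑ t, bval (d t) * ⟪X i t, β⟫) /
    ∑ f ∈ altSet T (Y i), Real.exp (∑ t, bval (f t) * ⟪X i t, β⟫)

/-- Row index set of the matrix in Assumption 1: pairs `(i, d)` with `d ∈ B_i`. -/
abbrev RowIdx (n T : ℕ) (Y : Fin n → Fin T → Bool) :=
  (i : Fin n) × {d : Fin T → Bool // d ∈ altSet T (Y i)}

/-- The matrix of Assumption 1, evaluated at `β`. -/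
def rowMat {n T p : ℕ} (X : Fin n → Fin T → EuclideanSpace ℝ (Fin p))
    (Y : Fin n → Fin T → Bool) (β : EuclideanSpace ℝ (Fin p)) :
    Matrix (RowIdx n T Y) (Fin p) ℝ :=
  fun r k =>
    (∑ t, bval (r.2.1 t) * X r.1 t k) -
      ∑ e ∈ altSet T (Y r.1),
        cweight X Y r.1 e β * ∑ t, bval (e t) * X r.1 t k

/-- Assumption 1 (full rank). -/
def Assumption1 {n T p : ℕ} (X : Fin n → Fin T → EuclideanSpace ℝ (Fin p))
    (Y : Fin n → Fin T → Bool) : Prop :=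
  ∀ β : EuclideanSpace ℝ (Fin p), (rowMat X Y β).rank = p

/-- Assumption 2 (no separation). -/
def Assumption2 {n T p : ℕ} (X : Fin n → Fin T → EuclideanSpace ℝ (Fin p))
    (Y : Fin n → Fin T → Bool) : Prop :=
  ¬ ∃ βstar : EuclideanSpace ℝ (Fin p), βstar ≠ 0 ∧
      ∀ i, ∀ d ∈ altSet T (Y i),
        0 ≤ ∑ t, (bval (d t) - bval (Y i t)) * ⟪X i t, βstar⟫

/-- The vectors `v_{i,d} = ∑_t (d_t − Y_{it}) X_{it}`. -/
def vvec {n T p : ℕ} (X : Fin n → Fin T → EuclideanSpace ℝ (Fin p))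
    (Y : Fin n → Fin T → Bool) (i : Fin n) (d : Fin T → Bool) :
    EuclideanSpace ℝ (Fin p) :=
  ∑ t, (bval (d t) - bval (Y i t)) • X i t

section Aux
variable {n T p : ℕ} (X : Fin n → Fin T → EuclideanSpace ℝ (Fin p))
    (Y : Fin n → Fin T → Bool)

lemma self_mem_altSet (i : Fin n) : Y i ∈ altSet T (Y i) := by simp [altSet]
lemma vvec_self (i : Fin n) : vvec X Y i (Y i) = 0 := by simp [vvec]
lemma inner_vvec (i : Fin n) (d : Fin T → Bool) (β : EuclideanSpace ℝ (Fin p)) :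
    ⟪vvec X Y i d, β⟫ = ∑ t, (bval (d t) - bval (Y i t)) * ⟪X i t, β⟫ := by
  simp only [vvec, sum_inner, real_inner_smul_left]
def Sfun (i : Fin n) (β : EuclideanSpace ℝ (Fin p)) : ℝ :=
  ∑ d ∈ altSet T (Y i), Real.exp ⟪vvec X Y i d, β⟫
lemma term_le_Sfun (i : Fin n) {d : Fin T → Bool} (hd : d ∈ altSet T (Y i))
    (β : EuclideanSpace ℝ (Fin p)) : Real.exp ⟪vvec X Y i d, β⟫ ≤ Sfun X Y i β := by
  unfold Sfun
  exact Finset.single_le_sum (f := fun e => Real.exp ⟪vvec X Y i e, β⟫)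
    (fun _ _ => (Real.exp_pos _).le) hd
lemma one_le_Sfun (i : Fin n) (β : EuclideanSpace ℝ (Fin p)) : 1 ≤ Sfun X Y i β := by
  have := term_le_Sfun X Y i (self_mem_altSet Y i) β
  rwa [vvec_self, inner_zero_left, Real.exp_zero] at this
lemma Sfun_pos (i : Fin n) (β : EuclideanSpace ℝ (Fin p)) : 0 < Sfun X Y i β :=
  lt_of_lt_of_le one_pos (one_le_Sfun X Y i β)
lemma sum_bval_split (i : Fin n) (d : Fin T → Bool) (β : EuclideanSpace ℝ (Fin p)) :
    (∑ t, bval (d t) * ⟪X i t, β⟫)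
      = (∑ t, bval (Y i t) * ⟪X i t, β⟫) + ⟪vvec X Y i d, β⟫ := by
  rw [inner_vvec, ← Finset.sum_add_distrib]
  exact Finset.sum_congr rfl fun t _ => by ring
lemma logL_eq (β : EuclideanSpace ℝ (Fin p)) :
    logL X Y β = -∑ i, Real.log (Sfun X Y i β) := by
  unfold logL
  rw [← Finset.sum_neg_distrib]
  refine Finset.sum_congr rfl fun i _ => ?_
  have h : (∑ d ∈ altSet T (Y i), Real.exp (∑ t, bval (d t) * ⟪X i t, β⟫))
      = Real.exp (∑ t, bval (Y i t) * ⟪X i t, β⟫) * Sfun X Y i β := by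
    unfold Sfun
    rw [Finset.mul_sum]
    exact Finset.sum_congr rfl fun d _ => by rw [← Real.exp_add, sum_bval_split]
  rw [h, Real.log_mul (Real.exp_ne_zero _) (Sfun_pos X Y i β).ne', Real.log_exp]
  ring
lemma continuous_Sfun (i : Fin n) : Continuous (Sfun X Y i) :=
  continuous_finset_sum _ fun _ _ =>
    Real.continuous_exp.comp (continuous_const.inner continuous_id)
lemma continuous_F : Continuous fun β => ∑ i, Real.log (Sfun X Y i β) := by
  refine continuous_finset_sum _ fun i _ => ?_
  rw [continuous_iff_continuousAt]
  intro β
  exact (Real.continuousAt_log (Sfun_pos X Y i β).ne').comp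
    (continuous_Sfun X Y i).continuousAt


lemma maximizers_eq (h2 : Assumption2 X Y) {b1 b2 : EuclideanSpace ℝ (Fin p)}
    (hb1 : ∀ β, logL X Y β ≤ logL X Y b1)
    (hb2 : ∀ β, logL X Y β ≤ logL X Y b2) : b1 = b2 := by
  by_contra hne
  set m : EuclideanSpace ℝ (Fin p) := (2:ℝ)⁻¹ • (b1 + b2) with hm
  set f : Fin n → (Fin T → Bool) → ℝ :=
    fun i d => Real.exp ((2:ℝ)⁻¹ * ⟪vvec X Y i d, b1⟫) with hf
  set g : Fin n → (Fin T → Bool) → ℝ :=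
    fun i d => Real.exp ((2:ℝ)⁻¹ * ⟪vvec X Y i d, b2⟫) with hg
  have hinm : ∀ i d, ⟪vvec X Y i d, m⟫
      = (2:ℝ)⁻¹ * ⟪vvec X Y i d, b1⟫ + (2:ℝ)⁻¹ * ⟪vvec X Y i d, b2⟫ := by
    intro i d
    rw [hm, real_inner_smul_right, inner_add_right]
    ring
  have hM : ∀ i, Sfun X Y i m = ∑ d ∈ altSet T (Y i), f i d * g i d := by
    intro i; unfold Sfun
    exact Finset.sum_congr rfl fun d _ => by rw [hf, hg, ← Real.exp_add, hinm]
  have hA : ∀ i, Sfun X Y i b1 = ∑ d ∈ altSet T (Y i), (f i d) ^ 2 := by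
    intro i; unfold Sfun
    refine Finset.sum_congr rfl fun d _ => ?_
    rw [hf, sq, ← Real.exp_add]
    ring_nf
  have hB : ∀ i, Sfun X Y i b2 = ∑ d ∈ altSet T (Y i), (g i d) ^ 2 := by
    intro i; unfold Sfun
    refine Finset.sum_congr rfl fun d _ => ?_
    rw [hg, sq, ← Real.exp_add]
    ring_nf
  have hcs : ∀ i, (Sfun X Y i m) ^ 2 ≤ Sfun X Y i b1 * Sfun X Y i b2 := by
    intro i
    rw [hM, hA, hB]
    exact Finset.sum_mul_sq_le_sq_mul_sq _ _ _
  have key : ∀ i, 2 * Real.log (Sfun X Y i m)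
      ≤ Real.log (Sfun X Y i b1) + Real.log (Sfun X Y i b2) := by
    intro i
    have h2log : 2 * Real.log (Sfun X Y i m) = Real.log ((Sfun X Y i m) ^ 2) := by
      rw [Real.log_pow]; push_cast; ring
    rw [h2log, ← Real.log_mul (Sfun_pos X Y i b1).ne' (Sfun_pos X Y i b2).ne']
    exact Real.log_le_log (pow_pos (Sfun_pos X Y i m) 2) (hcs i)
  have hFb : (∑ i, Real.log (Sfun X Y i b1)) = ∑ i, Real.log (Sfun X Y i b2) := by
    have ha := hb1 b2; have hb := hb2 b1
    rw [logL_eq, logL_eq] at ha hb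
    linarith
  have hFm1 : (∑ i, Real.log (Sfun X Y i b1)) ≤ ∑ i, Real.log (Sfun X Y i m) := by
    have := hb1 m
    rw [logL_eq, logL_eq] at this
    linarith
  have hsumeq : (∑ i, 2 * Real.log (Sfun X Y i m))
      = ∑ i, (Real.log (Sfun X Y i b1) + Real.log (Sfun X Y i b2)) := by
    refine le_antisymm (Finset.sum_le_sum fun i _ => key i) ?_
    rw [Finset.sum_add_distrib, ← hFb, ← Finset.mul_sum]
    have h2m : (∑ i, 2 * Real.log (Sfun X Y i m)) = 2 * ∑ i, Real.log (Sfun X Y i m) := by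
      rw [Finset.mul_sum]
    linarith
  have heq := (Finset.sum_eq_sum_iff_of_le fun i _ => key i).1 hsumeq
  have hiz : ∀ i, ∀ d ∈ altSet T (Y i), ⟪vvec X Y i d, b1⟫ = ⟪vvec X Y i d, b2⟫ := by
    intro i d hd
    have hieq := heq i (Finset.mem_univ i)
    have hMsq : (Sfun X Y i m) ^ 2 = Sfun X Y i b1 * Sfun X Y i b2 := by
      have h1 : Real.log ((Sfun X Y i m) ^ 2)
          = Real.log (Sfun X Y i b1 * Sfun X Y i b2) := by
        rw [Real.log_mul (Sfun_pos X Y i b1).ne' (Sfun_pos X Y i b2).ne', Real.log_pow]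
        push_cast
        linarith
      exact Real.log_injOn_pos (Set.mem_Ioi.2 (pow_pos (Sfun_pos X Y i m) 2))
        (Set.mem_Ioi.2 (mul_pos (Sfun_pos X Y i b1) (Sfun_pos X Y i b2))) h1
    have hzero : ∑ e ∈ altSet T (Y i),
        (Sfun X Y i b2 * f i e - Sfun X Y i m * g i e) ^ 2 = 0 := by
      have hexp : ∑ e ∈ altSet T (Y i),
          (Sfun X Y i b2 * f i e - Sfun X Y i m * g i e) ^ 2
          = (Sfun X Y i b2) ^ 2 * (∑ e ∈ altSet T (Y i), (f i e) ^ 2)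
            - 2 * Sfun X Y i b2 * Sfun X Y i m * (∑ e ∈ altSet T (Y i), f i e * g i e)
            + (Sfun X Y i m) ^ 2 * (∑ e ∈ altSet T (Y i), (g i e) ^ 2) := by
        rw [Finset.mul_sum, Finset.mul_sum, Finset.mul_sum, ← Finset.sum_sub_distrib,
          ← Finset.sum_add_distrib]
        exact Finset.sum_congr rfl fun e _ => by ring
      rw [hexp, ← hA, ← hB, ← hM]
      linear_combination (- Sfun X Y i b2) * hMsq
    have hall := (Finset.sum_eq_zero_iff_of_nonneg fun e _ => sq_nonneg _).1 hzero
    have hfY : f i (Y i) = 1 := by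
      rw [hf]; simp [vvec_self]
    have hgY : g i (Y i) = 1 := by
      rw [hg]; simp [vvec_self]
    have hBM : Sfun X Y i b2 = Sfun X Y i m := by
      have h0 := hall (Y i) (self_mem_altSet Y i)
      rw [hfY, hgY, mul_one, mul_one, pow_eq_zero_iff (by norm_num), sub_eq_zero] at h0
      exact h0
    have hd0 := hall d hd
    rw [pow_eq_zero_iff (by norm_num : 2 ≠ 0), sub_eq_zero, ← hBM] at hd0
    have hfg : f i d = g i d :=
      mul_left_cancel₀ (Sfun_pos X Y i b2).ne' hd0
    rw [hf, hg] at hfg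
    have := Real.exp_injective hfg
    linarith
  exact h2 ⟨b1 - b2, sub_ne_zero.2 hne, fun i d hd => by
    rw [← inner_vvec, inner_sub_right, hiz i d hd, sub_self]⟩

set_option maxHeartbeats 1000000 in
lemma exists_max (hn : 1 ≤ n) (hp : 1 ≤ p) (h2 : Assumption2 X Y) :
    ∃ b : EuclideanSpace ℝ (Fin p), ∀ β, logL X Y β ≤ logL X Y b := by
  classical
  set F : EuclideanSpace ℝ (Fin p) → ℝ := fun β => ∑ i, Real.log (Sfun X Y i β) with hFdef
  have hFnonneg : ∀ β, 0 ≤ F β := fun β =>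
    Finset.sum_nonneg fun i _ => Real.log_nonneg (one_le_Sfun X Y i β)
  have hFcont : Continuous F := continuous_F X Y
  -- the finite family of vectors
  have hne : (Finset.univ : Finset (RowIdx n T Y)).Nonempty :=
    ⟨⟨⟨0, hn⟩, ⟨Y ⟨0, hn⟩, self_mem_altSet Y ⟨0, hn⟩⟩⟩, Finset.mem_univ _⟩
  set φ : EuclideanSpace ℝ (Fin p) → ℝ :=
    fun u => Finset.univ.sup' hne fun r : RowIdx n T Y => ⟪vvec X Y r.1 r.2.1, u⟫ with hφ
  have hφcont : Continuous φ :=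
    Continuous.finset_sup'_apply hne fun r _ => continuous_const.inner continuous_id
  haveI : Nontrivial (EuclideanSpace ℝ (Fin p)) := by
    refine nontrivial_of_ne (EuclideanSpace.single ⟨0, hp⟩ (1:ℝ)) 0 ?_
    intro h
    have h2 := congrArg norm h
    rw [EuclideanSpace.norm_single, norm_zero] at h2
    norm_num at h2
  have hsne : (Metric.sphere (0 : EuclideanSpace ℝ (Fin p)) 1).Nonempty :=
    NormedSpace.sphere_nonempty.mpr zero_le_one
  obtain ⟨u0, hu0mem, hu0min⟩ :=
    (isCompact_sphere (0 : EuclideanSpace ℝ (Fin p)) 1).exists_isMinOn hsne hφcont.continuousOn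
  rw [isMinOn_iff] at hu0min
  set ε : ℝ := φ u0 with hε
  have hu0ne : u0 ≠ 0 := by
    intro h
    rw [mem_sphere_zero_iff_norm, h, norm_zero] at hu0mem
    norm_num at hu0mem
  have hεpos : 0 < ε := by
    have hnot : ¬ ∀ i, ∀ d ∈ altSet T (Y i),
        0 ≤ ∑ t, (bval (d t) - bval (Y i t)) * ⟪X i t, -u0⟫ :=
      fun hall => h2 ⟨-u0, neg_ne_zero.mpr hu0ne, hall⟩
    push_neg at hnot
    obtain ⟨i, d, hd, hlt⟩ := hnot
    rw [← inner_vvec, inner_neg_right] at hlt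
    have hpos : 0 < ⟪vvec X Y i d, u0⟫ := by linarith
    have hle := Finset.le_sup' (fun r : RowIdx n T Y => ⟪vvec X Y r.1 r.2.1, u0⟫)
      (Finset.mem_univ (⟨i, ⟨d, hd⟩⟩ : RowIdx n T Y))
    exact lt_of_lt_of_le hpos hle
  have hbound : ∀ β : EuclideanSpace ℝ (Fin p), ε * ‖β‖ ≤ F β := by
    intro β
    rcases eq_or_ne β 0 with h0 | hβ
    · rw [h0, norm_zero, mul_zero]
      exact hFnonneg 0
    · have hnorm : 0 < ‖β‖ := norm_pos_iff.mpr hβ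
      set u : EuclideanSpace ℝ (Fin p) := ‖β‖⁻¹ • β with hu
      have humem : u ∈ Metric.sphere (0 : EuclideanSpace ℝ (Fin p)) 1 := by
        rw [mem_sphere_zero_iff_norm, hu, norm_smul, norm_inv, norm_norm,
          inv_mul_cancel₀ hnorm.ne']
      have h1 : ε ≤ φ u := hu0min u humem
      obtain ⟨r, _, hr⟩ := Finset.exists_mem_eq_sup' hne
        (fun r : RowIdx n T Y => ⟪vvec X Y r.1 r.2.1, u⟫)
      rw [hφ] at h1
      simp only at h1
      rw [hr] at h1
      rw [hu, real_inner_smul_right] at h1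
      have h3 : ε * ‖β‖ ≤ ⟪vvec X Y r.1 r.2.1, β⟫ := by
        have := mul_le_mul_of_nonneg_right h1 hnorm.le
        rwa [mul_comm ‖β‖⁻¹ _, mul_assoc, inv_mul_cancel₀ hnorm.ne', mul_one] at this
      refine h3.trans ?_
      have h4 : ⟪vvec X Y r.1 r.2.1, β⟫ ≤ Real.log (Sfun X Y r.1 β) := by
        have := Real.log_le_log (Real.exp_pos _) (term_le_Sfun X Y r.1 r.2.2 β)
        rwa [Real.log_exp] at this
      refine h4.trans ?_
      exact Finset.single_le_sum (f := fun i => Real.log (Sfun X Y i β))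
        (fun i _ => Real.log_nonneg (one_le_Sfun X Y i β)) (Finset.mem_univ r.1)
  -- minimize F on a big closed ball
  set R : ℝ := ε⁻¹ * F 0 with hR
  have hRnonneg : 0 ≤ R := mul_nonneg (inv_nonneg.mpr hεpos.le) (hFnonneg 0)
  have h0mem : (0 : EuclideanSpace ℝ (Fin p)) ∈ Metric.closedBall (0 : EuclideanSpace ℝ (Fin p)) R := by
    simpa [Metric.mem_closedBall] using hRnonneg
  obtain ⟨b, hbmem, hbmin⟩ := (isCompact_closedBall (0 : EuclideanSpace ℝ (Fin p)) R).exists_isMinOn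
    ⟨0, h0mem⟩ hFcont.continuousOn
  rw [isMinOn_iff] at hbmin
  refine ⟨b, fun β => ?_⟩
  rw [logL_eq, logL_eq]
  have : F b ≤ F β := by
    by_cases hmem : β ∈ Metric.closedBall (0 : EuclideanSpace ℝ (Fin p)) R
    · exact hbmin β hmem
    · have hout : R < ‖β‖ := by
        rw [Metric.mem_closedBall, dist_zero_right, not_le] at hmem
        exact hmem
      have h5 : F 0 < ε * ‖β‖ := by
        have := mul_lt_mul_of_pos_left hout hεpos
        rwa [hR, ← mul_assoc, mul_inv_cancel₀ hεpos.ne', one_mul] at this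
      exact le_of_lt (lt_of_le_of_lt (hbmin 0 h0mem) (h5.trans_le (hbound β)))
  exact neg_le_neg this

end Aux

/-- Theorem 1: under full rank, existence of a finite and unique maximizer of the
conditional log-likelihood is equivalent to no separation. -/
theorem stmt0 {n T p : ℕ} (hn : 1 ≤ n) (hT : 1 ≤ T) (hp : 1 ≤ p)
    (X : Fin n → Fin T → EuclideanSpace ℝ (Fin p)) (Y : Fin n → Fin T → Bool)
    (h1 : Assumption1 X Y) :
    (∃! b : EuclideanSpace ℝ (Fin p), ∀ β, logL X Y β ≤ logL X Y b) ↔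
      Assumption2 X Y := by
  constructor
  · intro hEU
    rw [Assumption2]
    intro hsep
    obtain ⟨βs, hβs, hall⟩ := hsep
    obtain ⟨b, hb, huniq⟩ := hEU
    have hmax2 : ∀ β, logL X Y β ≤ logL X Y (b - βs) := by
      intro β
      refine (hb β).trans ?_
      rw [logL_eq, logL_eq]
      refine neg_le_neg (Finset.sum_le_sum fun i _ => ?_)
      refine Real.log_le_log (Sfun_pos X Y i (b - βs)) ?_
      unfold Sfun
      refine Finset.sum_le_sum fun d hd => ?_
      rw [inner_sub_right]
      refine Real.exp_le_exp.2 ?_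
      have h0 := hall i d hd
      rw [← inner_vvec] at h0
      linarith
    have hfix := huniq (b - βs) hmax2
    exact hβs (by rwa [sub_eq_self] at hfix)
  · intro h2
    obtain ⟨b, hb⟩ := exists_max X Y hn hp h2
    exact ⟨b, hb, fun y hy => maximizers_eq X Y h2 hy hb⟩
end
end

section
/- Suppose Assumption 2 (no separation) fails, i.e., there exists a nonzero β* ∈ ℝ^p such that ∑_{t=1}^T (d_t − Y_{it}) X_{it}'β* ≥ 0 for every i and every d ∈ B_i. Then the conditional log-likelihood log L has no unique maximizer: if β̂ ∈ ℝ^p satisfies log L(β̂) ≥ log L(β) for all β ∈ ℝ^p, then β̂ − β* is a distinct point also satisfying log L(β̂ − β*) ≥ log L(β) for all β ∈ ℝ^p. (Necessity direction of Theorem 1.) -/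
open scoped BigOperators RealInnerProductSpace

noncomputable section

/-- Necessity direction of Theorem 1: under separation there is no unique maximizer. -/
theorem stmt2 {n T p : ℕ} (hn : 1 ≤ n) (hT : 1 ≤ T) (hp : 1 ≤ p)
    (X : Fin n → Fin T → EuclideanSpace ℝ (Fin p)) (Y : Fin n → Fin T → Bool)
    (βstar : EuclideanSpace ℝ (Fin p)) (hne : βstar ≠ 0)
    (hsep : ∀ i, ∀ d ∈ altSet T (Y i),
      0 ≤ ∑ t, (bval (d t) - bval (Y i t)) * ⟪X i t, βstar⟫) :
    ∀ bhat : EuclideanSpace ℝ (Fin p), (∀ β, logL X Y β ≤ logL X Y bhat) →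
      bhat - βstar ≠ bhat ∧ ∀ β, logL X Y β ≤ logL X Y (bhat - βstar) := by
  intro bhat hmax
  refine ⟨fun h => hne (sub_eq_self.mp h), fun β => le_trans (hmax β) ?_⟩
  unfold logL
  apply Finset.sum_le_sum
  intro i _
  have hsub : ∀ d : Fin T → Bool,
      (∑ t, bval (d t) * ⟪X i t, bhat - βstar⟫) =
      (∑ t, bval (d t) * ⟪X i t, bhat⟫) - ∑ t, bval (d t) * ⟪X i t, βstar⟫ := by
    intro d
    rw [← Finset.sum_sub_distrib]
    congr 1; funext t
    rw [inner_sub_right, mul_sub]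
  have hmem : Y i ∈ altSet T (Y i) := by simp [altSet]
  have hApos : 0 < ∑ d ∈ altSet T (Y i), Real.exp (∑ t, bval (d t) * ⟪X i t, bhat⟫) :=
    Finset.sum_pos' (fun d _ => (Real.exp_pos _).le) ⟨Y i, hmem, Real.exp_pos _⟩
  have hA'pos : 0 < ∑ d ∈ altSet T (Y i), Real.exp (∑ t, bval (d t) * ⟪X i t, bhat - βstar⟫) :=
    Finset.sum_pos' (fun d _ => (Real.exp_pos _).le) ⟨Y i, hmem, Real.exp_pos _⟩
  have hineq : (∑ d ∈ altSet T (Y i), Real.exp (∑ t, bval (d t) * ⟪X i t, bhat - βstar⟫))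
      ≤ (∑ d ∈ altSet T (Y i), Real.exp (∑ t, bval (d t) * ⟪X i t, bhat⟫)) *
        Real.exp (-(∑ t, bval (Y i t) * ⟪X i t, βstar⟫)) := by
    rw [Finset.sum_mul]
    apply Finset.sum_le_sum
    intro d hd
    have hYd : (∑ t, bval (Y i t) * ⟪X i t, βstar⟫) ≤ ∑ t, bval (d t) * ⟪X i t, βstar⟫ := by
      have := hsep i d hd
      have h2 : (∑ t, (bval (d t) - bval (Y i t)) * ⟪X i t, βstar⟫) =
          (∑ t, bval (d t) * ⟪X i t, βstar⟫) - ∑ t, bval (Y i t) * ⟪X i t, βstar⟫ := by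
        rw [← Finset.sum_sub_distrib]
        congr 1; funext t; ring
      linarith [this, h2 ▸ this]
    rw [hsub d, sub_eq_add_neg, Real.exp_add]
    exact mul_le_mul_of_nonneg_left (Real.exp_le_exp.mpr (neg_le_neg hYd)) (Real.exp_pos _).le
  have hlog := Real.log_le_log hA'pos hineq
  rw [Real.log_mul (ne_of_gt hApos) (ne_of_gt (Real.exp_pos _)), Real.log_exp] at hlog
  rw [hsub (Y i)]
  linarith
end
end

section
/- Suppose Assumption 1 (full rank) holds. Then the conditional log-likelihood β ↦ log L(β) is strictly concave on ℝ^p: for all β₁ ≠ β₂ in ℝ^p and all λ ∈ (0,1), log L(λβ₁ + (1−λ)β₂) > λ log L(β₁) + (1−λ) log L(β₂). -/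
open scoped BigOperators RealInnerProductSpace

noncomputable section

/-!
Each individual contributes `⟪z_Y, β⟫ - log ∑_{d ∈ B_i} exp ⟪z_d, β⟫` with `z_d = ∑_t d_t X_{it}`:
a linear term minus a log-sum-exp of linear functionals, hence a concave function of `β`.
Along a segment from `β₂` to `β₁` the log-sum-exp is strictly convex as soon as
`d ↦ ⟪z_d, β₁ - β₂⟫` is not constant on `B_i` (strict convexity of `exp` after normalising
both sums to one). If it were constant on every `B_i`, every row of the Assumption 1 matrix would
annihilate `β₁ - β₂`, since its row `(i, d)` applied to `u` is `⟪z_d, u⟫` minus a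
`w_i`-weighted average of the `⟪z_e, u⟫`; full rank then forces `β₁ = β₂`.
-/

open Real Finset

theorem Matrix.mulVec_injective_of_rank_eq_card {m n R : Type*} [Fintype n] [CommRing R]
    [Nontrivial R] {A : Matrix m n R} (h : A.rank = Fintype.card n) :
    Function.Injective A.mulVec := by
  rw [Matrix.mulVec_injective_iff, linearIndependent_iff_card_eq_finrank_span, Set.finrank,
    ← Matrix.rank_eq_finrank_span_cols, h]

section LogSumExp

variable {ι : Type*} (s : Finset ι)

def logSumExp (a : ι → ℝ) : ℝ := log (∑ d ∈ s, exp (a d))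

variable {s}

lemma sum_exp_sub_logSumExp (hs : s.Nonempty) (a : ι → ℝ) :
    ∑ d ∈ s, exp (a d - logSumExp s a) = 1 := by
  have hpos : 0 < ∑ d ∈ s, exp (a d) := sum_pos (fun _ _ => exp_pos _) hs
  simp_rw [exp_sub]
  rw [← sum_div, logSumExp, exp_log hpos, div_self hpos.ne']

lemma logSumExp_add_const (hs : s.Nonempty) (a : ι → ℝ) (c : ℝ) :
    logSumExp s (fun d => a d + c) = logSumExp s a + c := by
  have hpos : 0 < ∑ d ∈ s, exp (a d) := sum_pos (fun _ _ => exp_pos _) hs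
  simp_rw [logSumExp, exp_add, ← sum_mul, log_mul hpos.ne' (exp_pos c).ne', log_exp]

lemma logSumExp_linearComb_sub (hs : s.Nonempty) (μ ν : ℝ) (a b : ι → ℝ) :
    logSumExp s (fun d => μ * a d + ν * b d) - (μ * logSumExp s a + ν * logSumExp s b) =
      log (∑ d ∈ s, exp (μ * (a d - logSumExp s a) + ν * (b d - logSumExp s b))) := by
  have hshift : ∀ d, μ * (a d - logSumExp s a) + ν * (b d - logSumExp s b) =
      (μ * a d + ν * b d) + -(μ * logSumExp s a + ν * logSumExp s b) := fun d => by ring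
  simp_rw [hshift]
  rw [← logSumExp, logSumExp_add_const hs, sub_eq_add_neg]

lemma sum_convexComb_exp_sub_logSumExp (hs : s.Nonempty) {μ ν : ℝ} (hμν : μ + ν = 1)
    (a b : ι → ℝ) :
    ∑ d ∈ s, (μ * exp (a d - logSumExp s a) + ν * exp (b d - logSumExp s b)) = 1 := by
  rw [sum_add_distrib, ← mul_sum, ← mul_sum, sum_exp_sub_logSumExp hs,
    sum_exp_sub_logSumExp hs, mul_one, mul_one, hμν]

theorem logSumExp_convexComb_le (hs : s.Nonempty) {μ ν : ℝ} (hμ : 0 ≤ μ) (hν : 0 ≤ ν)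
    (hμν : μ + ν = 1) (a b : ι → ℝ) :
    logSumExp s (fun d => μ * a d + ν * b d) ≤ μ * logSumExp s a + ν * logSumExp s b := by
  rw [← sub_nonpos, logSumExp_linearComb_sub hs]
  refine log_nonpos (sum_nonneg fun _ _ => (exp_pos _).le) ?_
  rw [← sum_convexComb_exp_sub_logSumExp hs hμν a b]
  exact sum_le_sum fun d _ => convexOn_exp.2 trivial trivial hμ hν hμν

theorem logSumExp_convexComb_lt (hs : s.Nonempty) {μ ν : ℝ} (hμ : 0 < μ) (hν : 0 < ν)
    (hμν : μ + ν = 1) {a b : ι → ℝ} (hab : ∃ d ∈ s, ∃ e ∈ s, a d - b d ≠ a e - b e) :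
    logSumExp s (fun d => μ * a d + ν * b d) < μ * logSumExp s a + ν * logSumExp s b := by
  rw [← sub_neg, logSumExp_linearComb_sub hs]
  refine log_neg (sum_pos (fun _ _ => exp_pos _) hs) ?_
  obtain ⟨j, hj, hne⟩ : ∃ j ∈ s, a j - logSumExp s a ≠ b j - logSumExp s b := by
    by_contra! hall
    obtain ⟨d, hd, e, he, hde⟩ := hab
    have := hall d hd
    have := hall e he
    exact hde (by linarith)
  rw [← sum_convexComb_exp_sub_logSumExp hs hμν a b]
  exact sum_lt_sum (fun d _ => convexOn_exp.2 trivial trivial hμ.le hν.le hμν)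
    ⟨j, hj, strictConvexOn_exp.2 trivial trivial hne hμ hν hμν⟩

end LogSumExp

section ConditionalLogit

open scoped Matrix

variable {n T p : ℕ} (X : Fin n → Fin T → EuclideanSpace ℝ (Fin p)) (Y : Fin n → Fin T → Bool)

def pathSum (i : Fin n) (d : Fin T → Bool) : EuclideanSpace ℝ (Fin p) :=
  ∑ t, bval (d t) • X i t

lemma sum_bval_mul_inner (i : Fin n) (d : Fin T → Bool) (β : EuclideanSpace ℝ (Fin p)) :
    ∑ t, bval (d t) * ⟪X i t, β⟫ = ⟪pathSum X i d, β⟫ := by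
  simp only [pathSum, sum_inner, real_inner_smul_left]

def indivLogL (i : Fin n) (β : EuclideanSpace ℝ (Fin p)) : ℝ :=
  ⟪pathSum X i (Y i), β⟫ - logSumExp (altSet T (Y i)) fun d => ⟪pathSum X i d, β⟫

lemma logL_eq_sum_indivLogL (β : EuclideanSpace ℝ (Fin p)) :
    logL X Y β = ∑ i, indivLogL X Y i β := by
  simp only [logL, indivLogL, logSumExp, sum_bval_mul_inner]

lemma altSet_nonempty (Yi : Fin T → Bool) : (altSet T Yi).Nonempty :=
  ⟨Yi, by simp [altSet]⟩

lemma convexComb_indivLogL_le (i : Fin n) (β₁ β₂ : EuclideanSpace ℝ (Fin p)) {lam : ℝ}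
    (hlam₀ : 0 ≤ lam) (hlam₁ : lam ≤ 1) :
    lam * indivLogL X Y i β₁ + (1 - lam) * indivLogL X Y i β₂ ≤
      indivLogL X Y i (lam • β₁ + (1 - lam) • β₂) := by
  have := logSumExp_convexComb_le (altSet_nonempty (Y i)) hlam₀ (sub_nonneg.2 hlam₁)
    (add_sub_cancel lam 1) (fun d => ⟪pathSum X i d, β₁⟫) (fun d => ⟪pathSum X i d, β₂⟫)
  simp only [indivLogL, inner_add_right, real_inner_smul_right]
  linarith

lemma convexComb_indivLogL_lt (i : Fin n) {β₁ β₂ : EuclideanSpace ℝ (Fin p)} {lam : ℝ}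
    (hlam₀ : 0 < lam) (hlam₁ : lam < 1)
    (hne : ∃ d ∈ altSet T (Y i), ∃ e ∈ altSet T (Y i),
      ⟪pathSum X i d, β₁ - β₂⟫ ≠ ⟪pathSum X i e, β₁ - β₂⟫) :
    lam * indivLogL X Y i β₁ + (1 - lam) * indivLogL X Y i β₂ <
      indivLogL X Y i (lam • β₁ + (1 - lam) • β₂) := by
  simp only [inner_sub_right] at hne
  have := logSumExp_convexComb_lt (altSet_nonempty (Y i)) hlam₀ (sub_pos.2 hlam₁)
    (add_sub_cancel lam 1) hne
  simp only [indivLogL, inner_add_right, real_inner_smul_right]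
  linarith

lemma sum_cweight (i : Fin n) (β : EuclideanSpace ℝ (Fin p)) :
    ∑ e ∈ altSet T (Y i), cweight X Y i e β = 1 := by
  have hpos : 0 < ∑ f ∈ altSet T (Y i), exp (∑ t, bval (f t) * ⟪X i t, β⟫) :=
    sum_pos (fun _ _ => exp_pos _) (altSet_nonempty (Y i))
  simp only [cweight]
  rw [← sum_div, div_self hpos.ne']

lemma rowMat_mulVec_apply (β u : EuclideanSpace ℝ (Fin p)) (r : RowIdx n T Y) :
    (rowMat X Y β *ᵥ u.ofLp) r = ⟪pathSum X r.1 r.2.1, u⟫ -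
      ∑ e ∈ altSet T (Y r.1), cweight X Y r.1 e β * ⟪pathSum X r.1 e, u⟫ := by
  have hrow : rowMat X Y β r = (pathSum X r.1 r.2.1 -
      ∑ e ∈ altSet T (Y r.1), cweight X Y r.1 e β • pathSum X r.1 e).ofLp := by
    ext k
    simp [rowMat, pathSum]
  have hdot : ∀ v : EuclideanSpace ℝ (Fin p), v.ofLp ⬝ᵥ u.ofLp = ⟪v, u⟫ := fun v => by
    rw [real_inner_comm, EuclideanSpace.inner_eq_star_dotProduct, star_trivial]
  change rowMat X Y β r ⬝ᵥ u.ofLp = _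
  rw [hrow, hdot, inner_sub_left, sum_inner]
  simp only [real_inner_smul_left]

lemma exists_inner_pathSum_ne (h1 : Assumption1 X Y) {u : EuclideanSpace ℝ (Fin p)}
    (hu : u ≠ 0) :
    ∃ i, ∃ d ∈ altSet T (Y i), ∃ e ∈ altSet T (Y i),
      ⟪pathSum X i d, u⟫ ≠ ⟪pathSum X i e, u⟫ := by
  by_contra! hconst
  have hker : rowMat X Y 0 *ᵥ u.ofLp = 0 := by
    funext ⟨i, d, hd⟩
    rw [rowMat_mulVec_apply, Pi.zero_apply,
      sum_congr rfl fun e he => by rw [hconst i e he d hd], ← sum_mul, sum_cweight, one_mul,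
      sub_self]
  have hinj := Matrix.mulVec_injective_of_rank_eq_card (by rw [h1 0, Fintype.card_fin])
  exact hu (WithLp.ofLp_injective _ (hinj (hker.trans (Matrix.mulVec_zero _).symm)))

end ConditionalLogit

theorem stmt9_general {n T p : ℕ}
    (X : Fin n → Fin T → EuclideanSpace ℝ (Fin p)) (Y : Fin n → Fin T → Bool)
    (h1 : Assumption1 X Y) :
    ∀ β₁ β₂ : EuclideanSpace ℝ (Fin p), β₁ ≠ β₂ → ∀ lam : ℝ, 0 < lam → lam < 1 →
      lam * logL X Y β₁ + (1 - lam) * logL X Y β₂ <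
        logL X Y (lam • β₁ + (1 - lam) • β₂) := by
  intro β₁ β₂ hne lam hlam₀ hlam₁
  obtain ⟨i₀, hi₀⟩ := exists_inner_pathSum_ne X Y h1 (sub_ne_zero.2 hne)
  simp only [logL_eq_sum_indivLogL, mul_sum, ← sum_add_distrib]
  exact sum_lt_sum (fun i _ => convexComb_indivLogL_le X Y i β₁ β₂ hlam₀.le hlam₁.le)
    ⟨i₀, mem_univ _, convexComb_indivLogL_lt X Y i₀ hlam₀ hlam₁ hi₀⟩

/-- Under full rank, the conditional log-likelihood is strictly concave on `ℝ^p`. -/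
theorem stmt9 {n T p : ℕ} (hn : 1 ≤ n) (hT : 1 ≤ T) (hp : 1 ≤ p)
    (X : Fin n → Fin T → EuclideanSpace ℝ (Fin p)) (Y : Fin n → Fin T → Bool)
    (h1 : Assumption1 X Y) :
    ∀ β₁ β₂ : EuclideanSpace ℝ (Fin p), β₁ ≠ β₂ → ∀ lam : ℝ, 0 < lam → lam < 1 →
      lam * logL X Y β₁ + (1 - lam) * logL X Y β₂ <
        logL X Y (lam • β₁ + (1 - lam) • β₂) :=
  stmt9_general X Y h1
end
end

section
/- Suppose β* ∈ ℝ^p satisfies the separation inequalities ∑_{t=1}^T (d_t − Y_{it}) X_{it}'β* ≥ 0 for every i ∈ {1,…,n} and every d ∈ B_i. Then for every β ∈ ℝ^p and every λ ≥ 0, log L(β − λβ*) ≥ log L(β); i.e., the conditional log-likelihood is nondecreasing along the ray β − λβ*, λ ≥ 0. -/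
open scoped BigOperators RealInnerProductSpace

noncomputable section

/-- Along a separating direction, the conditional log-likelihood is nondecreasing
along the ray `β - λ β*`, `λ ≥ 0`. -/
theorem stmt10 {n T p : ℕ} (hn : 1 ≤ n) (hT : 1 ≤ T) (hp : 1 ≤ p)
    (X : Fin n → Fin T → EuclideanSpace ℝ (Fin p)) (Y : Fin n → Fin T → Bool)
    (βstar : EuclideanSpace ℝ (Fin p))
    (hsep : ∀ i, ∀ d ∈ altSet T (Y i),
      0 ≤ ∑ t, (bval (d t) - bval (Y i t)) * ⟪X i t, βstar⟫) :
    ∀ β : EuclideanSpace ℝ (Fin p), ∀ lam : ℝ, 0 ≤ lam →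
      logL X Y β ≤ logL X Y (β - lam • βstar) := by
  intro β lam hlam
  unfold logL
  apply Finset.sum_le_sum
  intro i _
  set c : ℝ := ∑ t, bval (Y i t) * ⟪X i t, βstar⟫ with hc
  have hinner : ∀ d : Fin T → Bool,
      (∑ t, bval (d t) * ⟪X i t, β - lam • βstar⟫)
      = (∑ t, bval (d t) * ⟪X i t, β⟫) - lam * ∑ t, bval (d t) * ⟪X i t, βstar⟫ := by
    intro d
    rw [Finset.mul_sum, ← Finset.sum_sub_distrib]
    refine Finset.sum_congr rfl fun t _ => ?_
    rw [inner_sub_right, real_inner_smul_right]; ring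
  have hYmem : Y i ∈ altSet T (Y i) := by simp [altSet]
  have hsep' : ∀ d ∈ altSet T (Y i), c ≤ ∑ t, bval (d t) * ⟪X i t, βstar⟫ := by
    intro d hd
    have := hsep i d hd
    have hsplit : (∑ t, (bval (d t) - bval (Y i t)) * ⟪X i t, βstar⟫)
        = (∑ t, bval (d t) * ⟪X i t, βstar⟫) - c := by
      rw [hc, ← Finset.sum_sub_distrib]
      exact Finset.sum_congr rfl fun t _ => by ring
    linarith [hsplit ▸ this]
  have hZpos : 0 < ∑ f ∈ altSet T (Y i), Real.exp (∑ t, bval (f t) * ⟪X i t, β⟫) :=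
    Finset.sum_pos (fun f _ => Real.exp_pos _) ⟨Y i, hYmem⟩
  have hZ'pos : 0 < ∑ f ∈ altSet T (Y i),
      Real.exp (∑ t, bval (f t) * ⟪X i t, β - lam • βstar⟫) :=
    Finset.sum_pos (fun f _ => Real.exp_pos _) ⟨Y i, hYmem⟩
  have hZbound : (∑ f ∈ altSet T (Y i),
      Real.exp (∑ t, bval (f t) * ⟪X i t, β - lam • βstar⟫))
      ≤ Real.exp (-(lam * c)) * ∑ f ∈ altSet T (Y i),
          Real.exp (∑ t, bval (f t) * ⟪X i t, β⟫) := by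
    rw [Finset.mul_sum]
    refine Finset.sum_le_sum fun f hf => ?_
    rw [hinner f, ← Real.exp_add]
    apply Real.exp_le_exp.mpr
    have := hsep' f hf
    nlinarith
  have hlog : Real.log (∑ f ∈ altSet T (Y i),
        Real.exp (∑ t, bval (f t) * ⟪X i t, β - lam • βstar⟫))
      ≤ -(lam * c) + Real.log (∑ f ∈ altSet T (Y i),
          Real.exp (∑ t, bval (f t) * ⟪X i t, β⟫)) := by
    calc _ ≤ Real.log (Real.exp (-(lam * c)) * ∑ f ∈ altSet T (Y i),
          Real.exp (∑ t, bval (f t) * ⟪X i t, β⟫)) :=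
        Real.log_le_log hZ'pos hZbound
      _ = -(lam * c) + Real.log (∑ f ∈ altSet T (Y i),
          Real.exp (∑ t, bval (f t) * ⟪X i t, β⟫)) := by
        rw [Real.log_mul (Real.exp_ne_zero _) (ne_of_gt hZpos), Real.log_exp]
  have hS : (∑ t, bval (Y i t) * ⟪X i t, β - lam • βstar⟫)
      = (∑ t, bval (Y i t) * ⟪X i t, β⟫) - lam * c := hinner (Y i)
  rw [hS]
  linarith
end
end

section
/- Let v_1, …, v_m ∈ ℝ^p (m ≥ 1) and suppose that there do NOT exist real coefficients c_1, …, c_m with c_k ≥ 1 for all k and ∑_{k=1}^m c_k v_k = 0. Then there exists a nonzero β ∈ ℝ^p with ⟨v_k, β⟩ ≥ 0 for all k = 1, …, m. (Separating-hyperplane direction of the abstract duality underlying Theorem 2; no spanning hypothesis is needed.) -/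
open scoped BigOperators RealInnerProductSpace

noncomputable section

/-
If the `v k` do not span the space, any nonzero vector orthogonal to their span works. Otherwise
`c ↦ ∑ k, c k • v k` is a linear surjection, hence an open map, so it sends the open box
`{c | ∀ k, 1 < c k}` to an open convex set, which misses `0` by hypothesis. A functional
separating `0` from that set is positive on it, and letting a single coefficient `c k` tend to
infinity shows that it is nonnegative on `v k`; its Riesz representative is the required `β`.
-/

lemma nonneg_of_forall_pos_add_mul {a b : ℝ} (h : ∀ t : ℝ, 0 ≤ t → 0 < a + t * b) :
    0 ≤ b := by
  by_contra! hb
  have := h (|a| / -b) (div_nonneg (abs_nonneg a) (neg_nonneg.2 hb.le))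
  rw [div_mul_eq_mul_div, div_neg, mul_div_assoc, div_self hb.ne, mul_one] at this
  linarith [le_abs_self a]

theorem exists_strongDual_ne_zero_forall_nonneg_of_span_eq_top {ι E : Type*} [Fintype ι]
    [NormedAddCommGroup E] [NormedSpace ℝ E] [FiniteDimensional ℝ E] {v : ι → E}
    (hspan : Submodule.span ℝ (Set.range v) = ⊤)
    (h : ¬ ∃ c : ι → ℝ, (∀ k, 1 ≤ c k) ∧ ∑ k, c k • v k = 0) :
    ∃ f : StrongDual ℝ E, f ≠ 0 ∧ ∀ k, 0 ≤ f (v k) := by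
  classical
  set A := Fintype.linearCombination ℝ v
  set box : Set (ι → ℝ) := Set.univ.pi fun _ ↦ Set.Ioi 1
  have hA : Function.Surjective A :=
    (span_range_eq_top_iff_surjective_fintypeLinearCombination ℝ v).1 hspan
  have hopen : IsOpen (A '' box) :=
    A.isOpenMap_of_finiteDimensional hA _ (isOpen_set_pi Set.finite_univ fun _ _ ↦ isOpen_Ioi)
  have hconvex : Convex ℝ (A '' box) := (convex_pi fun _ _ ↦ convex_Ioi 1).linear_image A
  have hzero : (0 : E) ∉ A '' box := by
    rintro ⟨c, hc, hAc⟩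
    exact h ⟨c, fun k ↦ (hc k trivial).le, by rwa [Fintype.linearCombination_apply] at hAc⟩
  obtain ⟨f, hf⟩ := geometric_hahn_banach_point_open hconvex hopen hzero
  have hpos : ∀ c : ι → ℝ, (∀ k, 1 < c k) → 0 < f (A c) := fun c hc ↦ by
    simpa using hf (A c) ⟨c, fun k _ ↦ hc k, rfl⟩
  refine ⟨f, ?_, fun k ↦ ?_⟩
  · rintro rfl
    exact (hpos (fun _ ↦ 2) fun _ ↦ one_lt_two).ne' rfl
  · refine nonneg_of_forall_pos_add_mul (a := f (A fun _ ↦ 2)) fun t ht ↦ ?_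
    have hbox : ∀ j, 1 < ((fun _ ↦ 2) + Pi.single k t : ι → ℝ) j := fun j ↦ by
      rcases eq_or_ne j k with rfl | hj
      · simp only [Pi.add_apply, Pi.single_eq_same]; linarith
      · simp only [Pi.add_apply, Pi.single_eq_of_ne hj]; norm_num
    simpa only [A, map_add, Fintype.linearCombination_apply_single, map_smul, smul_eq_mul]
      using hpos _ hbox

theorem exists_ne_zero_forall_inner_nonneg_of_not_exists_sum_smul_eq_zero {ι E : Type*}
    [Fintype ι] [NormedAddCommGroup E] [InnerProductSpace ℝ E] [FiniteDimensional ℝ E]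
    (v : ι → E) (h : ¬ ∃ c : ι → ℝ, (∀ k, 1 ≤ c k) ∧ ∑ k, c k • v k = 0) :
    ∃ β : E, β ≠ 0 ∧ ∀ k, 0 ≤ ⟪v k, β⟫ := by
  by_cases hspan : Submodule.span ℝ (Set.range v) = ⊤
  · obtain ⟨f, hf0, hf⟩ := exists_strongDual_ne_zero_forall_nonneg_of_span_eq_top hspan h
    refine ⟨(InnerProductSpace.toDual ℝ E).symm f, by simpa using hf0, fun k ↦ ?_⟩
    rw [real_inner_comm, InnerProductSpace.toDual_symm_apply]
    exact hf k
  · rw [← Submodule.orthogonal_eq_bot_iff, ← Ne, Submodule.ne_bot_iff] at hspan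
    obtain ⟨β, hβ, hβ0⟩ := hspan
    exact ⟨β, hβ0, fun k ↦ (Submodule.inner_right_of_mem_orthogonal
      (Submodule.subset_span (Set.mem_range_self k)) hβ).ge⟩

theorem stmt13_general {p m : ℕ} (v : Fin m → EuclideanSpace ℝ (Fin p))
    (h : ¬ ∃ c : Fin m → ℝ, (∀ k, 1 ≤ c k) ∧ ∑ k, c k • v k = 0) :
    ∃ β : EuclideanSpace ℝ (Fin p), β ≠ 0 ∧ ∀ k, 0 ≤ ⟪v k, β⟫ :=
  exists_ne_zero_forall_inner_nonneg_of_not_exists_sum_smul_eq_zero v h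

/-- Separating-hyperplane direction of the abstract duality underlying Theorem 2. -/
theorem stmt13 {p m : ℕ} (hm : 1 ≤ m) (v : Fin m → EuclideanSpace ℝ (Fin p))
    (h : ¬ ∃ c : Fin m → ℝ, (∀ k, 1 ≤ c k) ∧ ∑ k, c k • v k = 0) :
    ∃ β : EuclideanSpace ℝ (Fin p), β ≠ 0 ∧ ∀ k, 0 ≤ ⟪v k, β⟫ :=
  stmt13_general v h
end
end
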